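/- If k ≥ 2, the first nontrivial Laplace eigenvalue of X_f satisfies λ₁ ≥ 1/(p^{k+1}(2k+1)), stated via the quadratic form: for every function g : K_f → ℝ with ∑_{y ∈ K_f} g(y) = 0, one has ∑_{y ∈ K_f} ∑_{s ∈ S} (g(y+s) − g(y))² + ∑_{y ∈ K_f, y ≠ 0} ∑_{s ∈ S} (g(s·y) − g(y))² ≥ (1/(p^{k+1}(2k+1))) · ∑_{y ∈ K_f} g(y)². -/

import Mathlib

/-!
Every `y ∈ K_f` is reached from `0` by a walk of length at most `k p`: write `y = ξ · q(ξ)` with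
`deg q < k` and follow Horner's scheme, where each coefficient costs one multiplication by `ξ` and
at most `p - 1` additions of `ξ`. For `g` of mean zero, `∑ g² ≤ ∑_y (g y - g 0)²`, and
Cauchy–Schwarz along a shortest path from `0` to `y`, which uses each edge at most once, bounds
each term by `k p` times the energy of `g`. Summing over the `p^k` vertices gives
`∑ g² ≤ p^(k+1) k · energy`.
-/

open Polynomial

namespace List

theorem sq_sum_le_length_mul_sum_sq (l : List ℝ) :
    l.sum ^ 2 ≤ l.length * (l.map (· ^ 2)).sum := by
  obtain ⟨n, x, rfl⟩ : ∃ n, ∃ x : Fin n → ℝ, l = ofFn x := ⟨_, _, (ofFn_getElem (xs := l)).symm⟩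
  simpa [sum_ofFn, map_ofFn, Function.comp_def] using
    sq_sum_le_card_mul_sum_sq (s := Finset.univ) (f := x)

end List

namespace Finset

theorem sum_sq_le_sum_sq_sub {ι : Type*} {s : Finset ι} {g : ι → ℝ}
    (hg : ∑ i ∈ s, g i = 0) (c : ℝ) : ∑ i ∈ s, g i ^ 2 ≤ ∑ i ∈ s, (g i - c) ^ 2 := by
  have hexpand : ∑ i ∈ s, (g i - c) ^ 2 = ∑ i ∈ s, g i ^ 2 + s.card * c ^ 2 := by
    simp only [sub_sq, sum_add_distrib, sum_sub_distrib, ← sum_mul, ← mul_sum, hg, sum_const,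
      nsmul_eq_mul]
    ring
  rw [hexpand]
  exact le_add_of_nonneg_right (by positivity)

end Finset

namespace SimpleGraph

variable {V : Type*} {G : SimpleGraph V}

def sqDiff (g : V → ℝ) : Sym2 V → ℝ :=
  Sym2.lift ⟨fun a b => (g b - g a) ^ 2, fun a b => by ring⟩

@[simp]
theorem sqDiff_dart_edge (g : V → ℝ) (d : G.Dart) : sqDiff g d.edge = (g d.snd - g d.fst) ^ 2 :=
  rfl

theorem sqDiff_nonneg (g : V → ℝ) (e : Sym2 V) : 0 ≤ sqDiff g e :=
  e.ind fun _ _ => sq_nonneg _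

namespace Walk

theorem sum_darts_sub (g : V → ℝ) {u v : V} (w : G.Walk u v) :
    (w.darts.map fun d => g d.snd - g d.fst).sum = g v - g u := by
  induction w with
  | nil => simp
  | cons h w ih => simp [ih]

theorem sq_sub_le_length_mul_sum_edges (g : V → ℝ) {u v : V} (w : G.Walk u v) :
    (g v - g u) ^ 2 ≤ w.length * (w.edges.map (sqDiff g)).sum := by
  have h := List.sq_sum_le_length_mul_sum_sq (w.darts.map fun d => g d.snd - g d.fst)
  simpa [sum_darts_sub, edges_eq_map_darts, Function.comp_def] using h

theorem IsPath.sum_sqDiff_edges_le [Fintype G.edgeSet] (g : V → ℝ) {u v : V} {w : G.Walk u v}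
    (hw : w.IsPath) :
    (w.edges.map (sqDiff g)).sum ≤ ∑ e ∈ G.edgeFinset, sqDiff g e := by
  classical
  rw [← List.sum_toFinset _ hw.edges_nodup]
  refine Finset.sum_le_sum_of_subset_of_nonneg (fun e he => ?_) fun e _ _ => sqDiff_nonneg g e
  simpa using w.edges_subset_edgeSet (List.mem_toFinset.mp he)

end Walk

theorem sq_sub_le_of_edist_le [Fintype G.edgeSet] (g : V → ℝ) {u v : V} {L : ℕ}
    (h : G.edist u v ≤ L) :
    (g v - g u) ^ 2 ≤ L * ∑ e ∈ G.edgeFinset, sqDiff g e := by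
  classical
  obtain ⟨w, hw⟩ := exists_walk_of_edist_ne_top (ne_top_of_le_ne_top (ENat.natCast_ne_top L) h)
  have hlen : (w.bypass.length : ℝ) ≤ L := by
    exact_mod_cast (ENat.natCast_le_natCast.mp (hw ▸ h)).trans' w.length_bypass_le_length
  calc (g v - g u) ^ 2 ≤ w.bypass.length * (w.bypass.edges.map (sqDiff g)).sum :=
        w.bypass.sq_sub_le_length_mul_sum_edges g
    _ ≤ L * ∑ e ∈ G.edgeFinset, sqDiff g e :=
        mul_le_mul hlen (w.bypass_isPath.sum_sqDiff_edges_le g)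
          (List.sum_nonneg (by simp [sqDiff_nonneg])) (Nat.cast_nonneg L)

theorem sum_sq_le_of_edist_le [Fintype V] [Fintype G.edgeSet] {g : V → ℝ} (hg : ∑ y, g y = 0)
    {v₀ : V} {L : ℕ} (hL : ∀ y, G.edist v₀ y ≤ L) :
    ∑ y, g y ^ 2 ≤ Fintype.card V * L * ∑ e ∈ G.edgeFinset, sqDiff g e :=
  calc ∑ y, g y ^ 2 ≤ ∑ y, (g y - g v₀) ^ 2 := Finset.sum_sq_le_sum_sq_sub hg _
    _ ≤ ∑ _y : V, L * ∑ e ∈ G.edgeFinset, sqDiff g e :=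
        Finset.sum_le_sum fun y _ => sq_sub_le_of_edist_le g (hL y)
    _ = _ := by simp [mul_assoc]

theorem sum_edgeFinset_sqDiff_le_of_subset_image [Fintype G.edgeSet] [DecidableEq V] {ι : Type*}
    {I : Finset ι} {e : ι → Sym2 V} (h : G.edgeFinset ⊆ I.image e) (g : V → ℝ) :
    ∑ x ∈ G.edgeFinset, sqDiff g x ≤ ∑ i ∈ I, sqDiff g (e i) :=
  (Finset.sum_le_sum_of_subset_of_nonneg h fun x _ _ => sqDiff_nonneg g x).trans
    (Finset.sum_image_le_of_nonneg fun x _ => sqDiff_nonneg g x)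

theorem sum_edgeFinset_sup_le [DecidableEq V] {G₁ G₂ : SimpleGraph V} [Fintype G₁.edgeSet]
    [Fintype G₂.edgeSet] [Fintype (G₁ ⊔ G₂).edgeSet] (g : V → ℝ) :
    ∑ x ∈ (G₁ ⊔ G₂).edgeFinset, sqDiff g x ≤
      ∑ x ∈ G₁.edgeFinset, sqDiff g x + ∑ x ∈ G₂.edgeFinset, sqDiff g x := by
  rw [edgeFinset_sup, ← Finset.sum_union_inter]
  exact le_add_of_nonneg_right (Finset.sum_nonneg fun x _ => sqDiff_nonneg g x)

theorem sum_edgeFinset_addCayley_le {M : Type*} [Add M] [Fintype M] [DecidableEq M]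
    (S : Finset M) [Fintype (addCayley (S : Set M)).edgeSet] (g : M → ℝ) :
    ∑ x ∈ (addCayley (S : Set M)).edgeFinset, sqDiff g x ≤
      ∑ y, ∑ s ∈ S, (g (y + s) - g y) ^ 2 := by
  refine (sum_edgeFinset_sqDiff_le_of_subset_image (I := Finset.univ ×ˢ S)
    (e := fun x => s(x.1, x.1 + x.2)) ?_ g).trans_eq (Finset.sum_product _ _ _)
  intro x hx
  induction x using Sym2.ind with | _ u v
  obtain ⟨huv, s, hs, rfl | rfl⟩ := (addCayley_adj' _ u v).mp (mem_edgeFinset.mp hx)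
  · exact Finset.mem_image.mpr ⟨(u, s), by simpa using hs, rfl⟩
  · exact Finset.mem_image.mpr ⟨(v, s), by simpa using hs, Sym2.eq_swap⟩

theorem sum_edgeFinset_mulCayley_le {M : Type*} [CommMonoidWithZero M] [Fintype M]
    [DecidableEq M] (S : Finset M) [Fintype (mulCayley (S : Set M)).edgeSet] (g : M → ℝ) :
    ∑ x ∈ (mulCayley (S : Set M)).edgeFinset, sqDiff g x ≤
      ∑ y ∈ Finset.univ.filter (fun y : M => y ≠ 0), ∑ s ∈ S, (g (s * y) - g y) ^ 2 := by
  refine (sum_edgeFinset_sqDiff_le_of_subset_image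
    (I := Finset.univ.filter (fun y : M => y ≠ 0) ×ˢ S)
    (e := fun x => s(x.1, x.2 * x.1)) ?_ g).trans_eq (Finset.sum_product _ _ _)
  intro x hx
  induction x using Sym2.ind with | _ u v
  obtain ⟨huv, s, hs, rfl | rfl⟩ := (mulCayley_adj' _ u v).mp (mem_edgeFinset.mp hx)
  · have hu : u ≠ 0 := by rintro rfl; simp at huv
    exact Finset.mem_image.mpr ⟨(u, s), by simpa [hu] using hs, by simp [mul_comm]⟩
  · have hv : v ≠ 0 := by rintro rfl; simp at huv
    exact Finset.mem_image.mpr ⟨(v, s), by simpa [hv] using hs, by simp [mul_comm, Sym2.eq_swap]⟩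

/-- `X_f` as a simple graph: dropping its loops and merging its parallel edges can only lower the
energy of a function. -/
def sumProductGraph {R : Type*} [Add R] [Mul R] (S : Finset R) : SimpleGraph R :=
  addCayley (S : Set R) ⊔ mulCayley (S : Set R)

section SumProductGraph

variable {R : Type*} [CommRing R] {S : Finset R} {s : R}

theorem sum_edgeFinset_sumProductGraph_le [Fintype R] [DecidableEq R]
    [Fintype (sumProductGraph S).edgeSet] (g : R → ℝ) :
    ∑ x ∈ (sumProductGraph S).edgeFinset, sqDiff g x ≤
      (∑ y, ∑ s ∈ S, (g (y + s) - g y) ^ 2) +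
        ∑ y ∈ Finset.univ.filter (fun y : R => y ≠ 0), ∑ s ∈ S, (g (s * y) - g y) ^ 2 := by
  have hsup : (sumProductGraph S).edgeFinset =
      (addCayley (S : Set R) ⊔ mulCayley (S : Set R)).edgeFinset := by
    ext x; simp only [mem_edgeFinset]; rfl
  rw [hsup]
  exact (sum_edgeFinset_sup_le g).trans
    (add_le_add (sum_edgeFinset_addCayley_le S g) (sum_edgeFinset_mulCayley_le S g))

theorem edist_add_le_one (hs : s ∈ S) (u : R) : (sumProductGraph S).edist u (u + s) ≤ 1 := by
  rw [edist_le_one_iff_adj_or_eq, or_iff_not_imp_right]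
  exact fun h => Or.inl ((addCayley_adj' _ _ _).mpr ⟨h, s, hs, Or.inl rfl⟩)

theorem edist_mul_le_one (hs : s ∈ S) (u : R) : (sumProductGraph S).edist u (s * u) ≤ 1 := by
  rw [edist_le_one_iff_adj_or_eq, or_iff_not_imp_right]
  exact fun h => Or.inr ((mulCayley_adj' _ _ _).mpr ⟨h, s, hs, Or.inl (mul_comm u s)⟩)

theorem edist_mul_add_nsmul_le (hs : s ∈ S) (u : R) (n : ℕ) :
    (sumProductGraph S).edist u (s * u + n • s) ≤ n + 1 := by
  induction n with
  | zero => simpa using edist_mul_le_one hs u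
  | succ n ih =>
    calc _ ≤ (sumProductGraph S).edist u (s * u + n • s) +
          (sumProductGraph S).edist (s * u + n • s) (s * u + n • s + s) := by
          rw [succ_nsmul, ← add_assoc]; exact SimpleGraph.edist_triangle
      _ ≤ n + 1 + 1 := add_le_add ih (edist_add_le_one hs _)
      _ = _ := by push_cast; ring

theorem edist_mul_add_algebraMap_mul_le {p : ℕ} [NeZero p] [Algebra (ZMod p) R] (hs : s ∈ S)
    (u : R) (c : ZMod p) :
    (sumProductGraph S).edist u (s * u + algebraMap (ZMod p) R c * s) ≤ p := by
  have hc : algebraMap (ZMod p) R c * s = c.val • s := by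
    rw [nsmul_eq_mul, ← map_natCast (algebraMap (ZMod p) R), ZMod.natCast_zmod_val]
  rw [hc]
  refine (edist_mul_add_nsmul_le hs u c.val).trans ?_
  exact_mod_cast c.val_lt

theorem edist_zero_mul_aeval_le_add {p : ℕ} [NeZero p] [Algebra (ZMod p) R] (hs : s ∈ S)
    (q : (ZMod p)[X]) :
    (sumProductGraph S).edist 0 (s * aeval s q) ≤
      (sumProductGraph S).edist 0 (s * aeval s q.divX) + p := by
  have hq : s * aeval s q = s * (s * aeval s q.divX) + algebraMap (ZMod p) R (q.coeff 0) * s := by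
    conv_lhs => rw [← X_mul_divX_add q]
    simp only [map_add, map_mul, aeval_X, aeval_C]
    ring
  rw [hq]
  exact SimpleGraph.edist_triangle.trans (add_le_add le_rfl (edist_mul_add_algebraMap_mul_le hs _ _))

theorem edist_zero_mul_aeval_le {p : ℕ} [NeZero p] [Algebra (ZMod p) R] (hs : s ∈ S)
    {q : (ZMod p)[X]} {m : ℕ} (hq : q.natDegree ≤ m) :
    (sumProductGraph S).edist 0 (s * aeval s q) ≤ (m + 1) * p := by
  induction m generalizing q with
  | zero =>
    have h0 : q.divX = 0 := divX_eq_zero_iff.mpr (eq_C_of_natDegree_le_zero hq)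
    simpa [h0] using edist_zero_mul_aeval_le_add hs q
  | succ m ih =>
    have hdivX : q.divX.natDegree ≤ m := by rw [natDegree_divX_eq_natDegree_tsub_one]; omega
    calc _ ≤ (sumProductGraph S).edist 0 (s * aeval s q.divX) + p :=
          edist_zero_mul_aeval_le_add hs q
      _ ≤ (m + 1) * p + p := add_le_add (ih hdivX) le_rfl
      _ = _ := by push_cast; ring

end SumProductGraph

end SimpleGraph

namespace AdjoinRoot

theorem root_ne_zero {R : Type*} [CommRing R] [IsDomain R] {f : R[X]} (hf : 2 ≤ f.natDegree) :
    root f ≠ 0 := by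
  rw [← mk_X, Ne, mk_eq_zero]
  exact fun h => by simpa using (natDegree_le_of_dvd h X_ne_zero).trans_lt' hf

theorem card_eq_pow_natDegree {K : Type*} [Field K] [Fintype K] {f : K[X]} (hf : f ≠ 0)
    [Fintype (AdjoinRoot f)] : Fintype.card (AdjoinRoot f) = Fintype.card K ^ f.natDegree := by
  rw [Module.card_eq_pow_finrank (K := K), (powerBasis hf).finrank, powerBasis_dim]

theorem edist_sumProductGraph_zero_le {p : ℕ} [Fact p.Prime] {f : (ZMod p)[X]}
    [Fact (Irreducible f)] (hf : 2 ≤ f.natDegree) {S : Finset (AdjoinRoot f)} (hS : root f ∈ S)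
    (y : AdjoinRoot f) : (SimpleGraph.sumProductGraph S).edist 0 y ≤ f.natDegree * p := by
  have hf0 : f ≠ 0 := (Fact.out : Irreducible f).ne_zero
  obtain ⟨q, hq, hy⟩ := (powerBasis hf0).exists_eq_aeval ((root f)⁻¹ * y)
  rw [powerBasis_dim] at hq
  rw [powerBasis_gen, inv_mul_eq_iff_eq_mul₀ (root_ne_zero hf)] at hy
  rw [hy]
  refine (SimpleGraph.edist_zero_mul_aeval_le hS (m := f.natDegree - 1) (by omega)).trans_eq ?_
  norm_cast
  rw [Nat.sub_add_cancel (by omega)]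

end AdjoinRoot

open SimpleGraph in
theorem stmt_13_general (p k : ℕ) [Fact p.Prime] (f : (ZMod p)[X]) [Fact (Irreducible f)]
    [Fintype (AdjoinRoot f)] [DecidableEq (AdjoinRoot f)]
    (hdeg : f.natDegree = k) (hk : 2 ≤ k) :
    let S : Finset (AdjoinRoot f) :=
      (Finset.range k).image (fun i => AdjoinRoot.root f ^ p ^ i)
    ∀ g : AdjoinRoot f → ℝ, (∑ y : AdjoinRoot f, g y) = 0 →
      (∑ y : AdjoinRoot f, ∑ s ∈ S, (g (y + s) - g y) ^ 2)
        + (∑ y ∈ Finset.univ.filter (fun y : AdjoinRoot f => y ≠ 0),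
            ∑ s ∈ S, (g (s * y) - g y) ^ 2)
        ≥ (1 / ((p : ℝ) ^ (k + 1) * (2 * (k : ℝ) + 1))) * ∑ y : AdjoinRoot f, g y ^ 2 := by
  intro S g hg
  classical
  set E := ∑ e ∈ (sumProductGraph S).edgeFinset, sqDiff g e
  have hroot : AdjoinRoot.root f ∈ S := Finset.mem_image.mpr ⟨0, by simp; omega, by simp⟩
  have hcard : Fintype.card (AdjoinRoot f) = p ^ k := by
    rw [AdjoinRoot.card_eq_pow_natDegree (Fact.out : Irreducible f).ne_zero, ZMod.card, hdeg]
  have hpoincare : ∑ y, g y ^ 2 ≤ p ^ k * (k * p) * E := by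
    have := (sumProductGraph S).sum_sq_le_of_edist_le hg
      (AdjoinRoot.edist_sumProductGraph_zero_le (hdeg ▸ hk) hroot)
    rwa [hcard, hdeg, Nat.cast_pow, Nat.cast_mul] at this
  have henergy := sum_edgeFinset_sumProductGraph_le (S := S) g
  have hE : 0 ≤ E := Finset.sum_nonneg fun x _ => sqDiff_nonneg g x
  have hp : (0 : ℝ) < p := by exact_mod_cast (Fact.out : p.Prime).pos
  rw [ge_iff_le, one_div_mul_eq_div, div_le_iff₀ (by positivity)]
  calc ∑ y, g y ^ 2 ≤ p ^ (k + 1) * k * E := by rw [pow_succ]; linear_combination hpoincare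
    _ ≤ p ^ (k + 1) * (2 * k + 1) * ((∑ y, ∑ s ∈ S, (g (y + s) - g y) ^ 2) +
          ∑ y ∈ Finset.univ.filter (fun y => y ≠ 0), ∑ s ∈ S, (g (s * y) - g y) ^ 2) := by
        gcongr
        linarith
    _ = _ := by ring

/-- If `k ≥ 2`, the first nontrivial Laplace eigenvalue of `X_f` satisfies
`λ₁ ≥ 1/(p^{k+1}(2k+1))`, stated via the Laplacian quadratic form. -/
theorem stmt_13 (p k : ℕ) [Fact p.Prime] (f : (ZMod p)[X]) [Fact (Irreducible f)]
    [Fintype (AdjoinRoot f)] [DecidableEq (AdjoinRoot f)]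
    (hmonic : f.Monic) (hdeg : f.natDegree = k) (hk : 2 ≤ k) :
    let S : Finset (AdjoinRoot f) :=
      (Finset.range k).image (fun i => AdjoinRoot.root f ^ p ^ i)
    ∀ g : AdjoinRoot f → ℝ, (∑ y : AdjoinRoot f, g y) = 0 →
      (∑ y : AdjoinRoot f, ∑ s ∈ S, (g (y + s) - g y) ^ 2)
        + (∑ y ∈ Finset.univ.filter (fun y : AdjoinRoot f => y ≠ 0),
            ∑ s ∈ S, (g (s * y) - g y) ^ 2)
        ≥ (1 / ((p : ℝ) ^ (k + 1) * (2 * (k : ℝ) + 1))) * ∑ y : AdjoinRoot f, g y ^ 2 :=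
  stmt_13_general p k f hdeg hk
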